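/- Let N ≥ 2 be an integer, b ∈ ℝ², and let f : ℝ² → ℝ be continuously differentiable. Let h(ξ) = |ξ + b|² and k(ξ) = |ξ|². Then for every ξ ∈ ℝ², Σ_{l=1}^{N} {k, f}(Q_l(ξ + b)) = {h, V*_b f}(ξ), i.e. V*_b({|·|², f}) = {|T_b ·|², V*_b f} pointwise. -/

import Mathlib

open Real Finset

/-- The Poisson bracket `{g, f} = ∂₁g ∂₂f - ∂₂g ∂₁f` on the plane identified with `ℂ`,
where `∂₁` (resp. `∂₂`) is the derivative in the direction `1` (resp. `I`). -/
noncomputable def pb (g f : ℂ → ℝ) (x : ℂ) : ℝ :=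
  fderiv ℝ g x 1 * fderiv ℝ f x Complex.I - fderiv ℝ g x Complex.I * fderiv ℝ f x 1

/-- The operator `(V*_b f)(ξ) = ∑_{l=1}^{N} f(Q_l (ξ + b))`, where the rotation `Q_l`
by angle `2πl/N` is multiplication by `exp(2πi/N)^l`. -/
noncomputable def Vstar (N : ℕ) (b : ℂ) (f : ℂ → ℝ) (ξ : ℂ) : ℝ :=
  ∑ l ∈ Finset.Icc 1 N, f ((Complex.exp (2 * π * Complex.I / N)) ^ l * (ξ + b))

/-!
Bracketing with `|· + b|²` is twice the derivative along the rotation field `ξ ↦ I (ξ + b)`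
about `-b`: `{|· + b|², g}(ξ) = 2 Dg(ξ)(I (ξ + b))`. Every summand `ξ ↦ f (Q_l (ξ + b))` of
`V*_b f` has derivative `Df(Q_l (ξ + b)) ∘ Q_l`, and the rotation `Q_l` commutes with `I`, so it
carries this field to the rotation field `z ↦ I z` about the origin at `z = Q_l (ξ + b)`.
-/

lemma Complex.I_mul_eq_re_smul_I_sub_im_smul_one (w : ℂ) :
    Complex.I * w = w.re • Complex.I - w.im • (1 : ℂ) := by
  apply Complex.ext <;> simp

lemma Complex.real_inner_one_right (w : ℂ) : inner ℝ w (1 : ℂ) = w.re := by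
  simp [Complex.inner]

lemma Complex.real_inner_I_right (w : ℂ) : inner ℝ w Complex.I = w.im := by
  simp [Complex.inner]

lemma fderiv_normSq_add_const_apply (b x v : ℂ) :
    fderiv ℝ (fun η : ℂ => ‖η + b‖ ^ 2) x v = 2 * inner ℝ (x + b) v := by
  have h : HasFDerivAt (fun η : ℂ => ‖η + b‖ ^ 2) _ x :=
    ((hasFDerivAt_id x).add_const b).norm_sq
  rw [h.fderiv]
  simp only [FunLike.coe_smul, Pi.smul_apply, ContinuousLinearMap.comp_apply,
    ContinuousLinearMap.id_apply, innerSL_apply_apply, id_eq, nsmul_eq_mul, Nat.cast_ofNat]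

lemma pb_normSq_add_const (b : ℂ) (g : ℂ → ℝ) (x : ℂ) :
    pb (fun η => ‖η + b‖ ^ 2) g x = 2 * fderiv ℝ g x (Complex.I * (x + b)) := by
  rw [pb, fderiv_normSq_add_const_apply, fderiv_normSq_add_const_apply,
    Complex.I_mul_eq_re_smul_I_sub_im_smul_one, map_sub, map_smul, map_smul]
  simp only [Complex.real_inner_one_right, Complex.real_inner_I_right, smul_eq_mul]
  ring

lemma pb_normSq (g : ℂ → ℝ) (x : ℂ) :
    pb (fun η => ‖η‖ ^ 2) g x = 2 * fderiv ℝ g x (Complex.I * x) := by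
  simpa using pb_normSq_add_const 0 g x

lemma hasFDerivAt_comp_mul_add {f : ℂ → ℝ} {c b ξ : ℂ}
    (hf : DifferentiableAt ℝ f (c * (ξ + b))) :
    HasFDerivAt (fun η => f (c * (η + b)))
      ((fderiv ℝ f (c * (ξ + b))).comp (c • ContinuousLinearMap.id ℝ ℂ)) ξ :=
  hf.hasFDerivAt.comp ξ (((hasFDerivAt_id ξ).add_const b).const_mul c)

lemma fderiv_Vstar_apply (N : ℕ) (b : ℂ) {f : ℂ → ℝ} (hf : Differentiable ℝ f) (ξ v : ℂ) :
    fderiv ℝ (Vstar N b f) ξ v =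
      ∑ l ∈ Icc 1 N, fderiv ℝ f (Complex.exp (2 * π * Complex.I / N) ^ l * (ξ + b))
        (Complex.exp (2 * π * Complex.I / N) ^ l * v) := by
  have hV : HasFDerivAt (Vstar N b f) _ ξ := HasFDerivAt.fun_sum (u := Icc 1 N) fun l _ =>
    hasFDerivAt_comp_mul_add (c := Complex.exp (2 * π * Complex.I / N) ^ l) (b := b) (ξ := ξ)
      (hf _)
  rw [hV.fderiv]
  simp

theorem Vstar_intertwines_rotation_generators_general
    (N : ℕ) (b : ℂ) (f : ℂ → ℝ) (hf : ContDiff ℝ 1 f) :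
    ∀ ξ : ℂ,
      (∑ l ∈ Finset.Icc 1 N,
        pb (fun η => ‖η‖ ^ 2) f
          ((Complex.exp (2 * π * Complex.I / N)) ^ l * (ξ + b))) =
      pb (fun η => ‖η + b‖ ^ 2) (Vstar N b f) ξ := by
  intro ξ
  rw [pb_normSq_add_const, fderiv_Vstar_apply N b (hf.differentiable one_ne_zero), mul_sum]
  refine sum_congr rfl fun l _ => ?_
  rw [pb_normSq, mul_left_comm]

/-- `V*_b` intertwines the unshifted and shifted rotation generators:
`V*_b({|·|², f}) = {|T_b ·|², V*_b f}` pointwise, for `f` of class `C¹`. -/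
theorem Vstar_intertwines_rotation_generators
    (N : ℕ) (hN : 2 ≤ N) (b : ℂ) (f : ℂ → ℝ) (hf : ContDiff ℝ 1 f) :
    ∀ ξ : ℂ,
      (∑ l ∈ Finset.Icc 1 N,
        pb (fun η => ‖η‖ ^ 2) f
          ((Complex.exp (2 * π * Complex.I / N)) ^ l * (ξ + b))) =
      pb (fun η => ‖η + b‖ ^ 2) (Vstar N b f) ξ :=
  Vstar_intertwines_rotation_generators_general N b f hf
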